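/- arXiv:1807.02218 — 5 statements merged into one kernel-verified Lean document; each statement's English description precedes it below -/
import Mathlib

section
/- Assume (S_j)_{j∈ℕ} and (F_j)_{j∈ℕ} are sequences in H with ⟪S_j, F_k⟫ = δ_{jk} for all j,k, such that every x ∈ H has the expansion x = ∑_j ⟪x, F_j⟫ S_j converging in the norm of H, and such that expansions are unique: whenever c : ℕ → ℂ is a sequence for which ∑_j c_j S_j converges in H to 0, then c_j = 0 for all j. Let (t_j)_{j∈ℕ} be points of Ω. Then the sampling expansion holds, i.e. for every x ∈ H one has x = ∑_j ⟪x, K t_j⟫ S_j with convergence in H (so that x̂(t) = ∑_j x̂(t_j) Ŝ_j(t) for all t ∈ Ω), if and only if F_j = K t_j for every j ∈ ℕ. -/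
open scoped InnerProductSpace

/-- Hilbert-space case of the characterization of sampling bases: with the paper's
inner product `⟪x,y⟫ := ⟪y,x⟫_ℂ` (linear in the first argument), a basis `(S_j)` of the
reproducing kernel space built from `K : Ω → H` (`x̂(t) = ⟪x, K t⟫`) with biorthogonal
sequence `(F_j)` yields the sampling expansion `x = ∑_j ⟪x, K t_j⟫ S_j` for all `x`
iff `F_j = K t_j` for all `j`. -/
theorem stmt1 {Ω : Type*} [Nonempty Ω] {H : Type*}
    [NormedAddCommGroup H] [InnerProductSpace ℂ H] [CompleteSpace H]
    (K : Ω → H) (hK : Dense ((Submodule.span ℂ (Set.range K) : Submodule ℂ H) : Set H))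
    (S F : ℕ → H)
    (hbi : ∀ j k : ℕ, ⟪F k, S j⟫_ℂ = if j = k then 1 else 0)
    (hexp : ∀ x : H, HasSum (fun j : ℕ => ⟪F j, x⟫_ℂ • S j) x)
    (huniq : ∀ c : ℕ → ℂ, HasSum (fun j : ℕ => c j • S j) 0 → ∀ j, c j = 0)
    (t : ℕ → Ω) :
    (∀ x : H, HasSum (fun j : ℕ => ⟪K (t j), x⟫_ℂ • S j) x) ↔
      (∀ j : ℕ, F j = K (t j)) := by
  constructor
  · intro h j
    have key : ∀ x : H, ⟪K (t j) - F j, x⟫_ℂ = 0 := by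
      intro x
      have hdiff : HasSum (fun i : ℕ => (⟪K (t i), x⟫_ℂ - ⟪F i, x⟫_ℂ) • S i) 0 := by
        have := (h x).sub (hexp x)
        simpa [sub_smul] using this
      have := huniq _ hdiff j
      simpa [inner_sub_left] using this
    have : K (t j) - F j = 0 := by
      have := inner_self_eq_zero.mp (key (K (t j) - F j))
      exact this
    exact (sub_eq_zero.mp this).symm
  · intro h x
    simpa [h] using hexp x
end

section
/- For all j, k ∈ ℕ one has ⟪S_j, K t_k⟫ = a_j δ_{jk}; that is, the interpolation property S_j(t_k) = a_j δ_{jk} holds, so the scaled kernel sections ((1/\overline{a_k}) K t_k)_{k∈ℕ} form a biorthogonal system to (S_j)_{j∈ℕ} in H. -/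
open scoped InnerProductSpace

/-- Interpolation/biorthogonality (Hilbert-space case): `S_j(t_k) = ⟪S_j, K t_k⟫ = a_j δ_{jk}`,
so the scaled kernel sections `(1/conj a_k) • K t_k` are biorthogonal to `(S_j)`.
(The paper's inner product `⟪x,y⟫`, linear in the first argument, is `⟪y,x⟫_ℂ`.) -/
theorem stmt6 {Ω : Type*} [Nonempty Ω] {H : Type*}
    [NormedAddCommGroup H] [InnerProductSpace ℂ H] [CompleteSpace H]
    (K : Ω → H) (hK : Dense ((Submodule.span ℂ (Set.range K) : Submodule ℂ H) : Set H))
    (S : ℕ → H)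
    (hl2 : ∀ t : Ω, Memℓp (fun j : ℕ => ⟪K t, S j⟫_ℂ) 2)
    (hdense : Dense ((Submodule.span ℂ
        {f : lp (fun _ : ℕ => ℂ) 2 | ∃ t : Ω, ∀ j : ℕ, f j = ⟪K t, S j⟫_ℂ} :
          Submodule ℂ (lp (fun _ : ℕ => ℂ) 2)) : Set (lp (fun _ : ℕ => ℂ) 2)))
    (hindep : ∀ c : lp (fun _ : ℕ => ℂ) 2,
      (∀ t : Ω, ∑' j : ℕ, c j * ⟪K t, S j⟫_ℂ = 0) → c = 0)
    (t : ℕ → Ω) (a : ℕ → ℂ) (ha : ∀ j, a j ≠ 0)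
    (hsamp1 : ∀ x : H, Memℓp (fun j : ℕ => ⟪K (t j), x⟫_ℂ / a j) 2)
    (hsamp2 : ∀ x : H, ∀ s : Ω,
      Summable (fun j : ℕ => ‖⟪K (t j), x⟫_ℂ / a j * ⟪K s, S j⟫_ℂ‖) ∧
      ∑' j : ℕ, ⟪K (t j), x⟫_ℂ / a j * ⟪K s, S j⟫_ℂ = ⟪K s, x⟫_ℂ) :
    ∀ j k : ℕ, ⟪K (t k), S j⟫_ℂ = if j = k then a j else 0 := by
  intro j k
  -- consider c = (S_j(t_i)/a_i)_i - e_j ∈ ℓ²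
  set c : lp (fun _ : ℕ => ℂ) 2 :=
    (⟨_, hsamp1 (S j)⟩ : lp (fun _ : ℕ => ℂ) 2) - lp.single 2 j (1 : ℂ) with hc
  have hcapp : ∀ i : ℕ, c i =
      ⟪K (t i), S j⟫_ℂ / a i - (if i = j then (1 : ℂ) else 0) := by
    intro i
    have : c i = ⟪K (t i), S j⟫_ℂ / a i
        - (lp.single 2 j (1 : ℂ) : lp (fun _ : ℕ => ℂ) 2) i := rfl
    rw [this, lp.single_apply]
    by_cases h : i = j <;> simp [h]
  have hczero : c = 0 := by
    apply hindep
    intro s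
    have h1 : Summable (fun i : ℕ => ⟪K (t i), S j⟫_ℂ / a i * ⟪K s, S i⟫_ℂ) :=
      Summable.of_norm (hsamp2 (S j) s).1
    have h2 : Summable (fun i : ℕ => (if i = j then (1 : ℂ) else 0) * ⟪K s, S i⟫_ℂ) := by
      apply summable_of_ne_finset_zero (s := {j})
      intro i hi
      simp at hi
      simp [hi]
    have : (fun i : ℕ => c i * ⟪K s, S i⟫_ℂ) =
        fun i : ℕ => ⟪K (t i), S j⟫_ℂ / a i * ⟪K s, S i⟫_ℂ
          - (if i = j then (1 : ℂ) else 0) * ⟪K s, S i⟫_ℂ := by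
      funext i; rw [hcapp i]; ring
    rw [this, Summable.tsum_sub h1 h2, (hsamp2 (S j) s).2]
    have : ∑' i : ℕ, (if i = j then (1 : ℂ) else 0) * ⟪K s, S i⟫_ℂ
        = ⟪K s, S j⟫_ℂ := by
      rw [show (fun i : ℕ => (if i = j then (1:ℂ) else 0) * ⟪K s, S i⟫_ℂ)
          = fun i : ℕ => if i = j then ⟪K s, S j⟫_ℂ else 0 by
        funext i; by_cases h : i = j <;> simp [h]]
      exact tsum_ite_eq j _
    rw [this, sub_self]
  have hk : ⟪K (t k), S j⟫_ℂ / a k - (if k = j then (1 : ℂ) else 0) = 0 := by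
    have := hcapp k
    rw [hczero] at this
    simpa using this.symm
  by_cases h : j = k
  · subst h
    rw [if_pos rfl] at hk ⊢
    have h1 : ⟪K (t j), S j⟫_ℂ / a j = 1 := by linear_combination hk
    exact (div_eq_one_iff_eq (ha j)).mp h1
  · have hk' : k ≠ j := fun hkj => h hkj.symm
    simp only [if_neg hk', sub_zero, div_eq_zero_iff] at hk
    rcases hk with hk | hk
    · simp [h, hk]
    · exact absurd hk (ha k)
end

section
/- If x ∈ H satisfies x̂(t_j) = 0 for every j ∈ ℕ, then x = 0; equivalently, the linear span of the kernel sections {K t_j : j ∈ ℕ} at the sample points is dense in H. -/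
open scoped InnerProductSpace

/-- Completeness of the kernel sections at the sample points (Hilbert-space case):
if `x̂(t_j) = ⟪x, K t_j⟫ = 0` for all `j` then `x = 0`. -/
theorem stmt8 {Ω : Type*} [Nonempty Ω] {H : Type*}
    [NormedAddCommGroup H] [InnerProductSpace ℂ H] [CompleteSpace H]
    (K : Ω → H) (hK : Dense ((Submodule.span ℂ (Set.range K) : Submodule ℂ H) : Set H))
    (S : ℕ → H)
    (hl2 : ∀ t : Ω, Memℓp (fun j : ℕ => ⟪K t, S j⟫_ℂ) 2)
    (hdense : Dense ((Submodule.span ℂ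
        {f : lp (fun _ : ℕ => ℂ) 2 | ∃ t : Ω, ∀ j : ℕ, f j = ⟪K t, S j⟫_ℂ} :
          Submodule ℂ (lp (fun _ : ℕ => ℂ) 2)) : Set (lp (fun _ : ℕ => ℂ) 2)))
    (hindep : ∀ c : lp (fun _ : ℕ => ℂ) 2,
      (∀ t : Ω, ∑' j : ℕ, c j * ⟪K t, S j⟫_ℂ = 0) → c = 0)
    (t : ℕ → Ω) (a : ℕ → ℂ) (ha : ∀ j, a j ≠ 0)
    (hsamp1 : ∀ x : H, Memℓp (fun j : ℕ => ⟪K (t j), x⟫_ℂ / a j) 2)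
    (hsamp2 : ∀ x : H, ∀ s : Ω,
      Summable (fun j : ℕ => ‖⟪K (t j), x⟫_ℂ / a j * ⟪K s, S j⟫_ℂ‖) ∧
      ∑' j : ℕ, ⟪K (t j), x⟫_ℂ / a j * ⟪K s, S j⟫_ℂ = ⟪K s, x⟫_ℂ) :
    ∀ x : H, (∀ j : ℕ, ⟪K (t j), x⟫_ℂ = 0) → x = 0 := by
  intro x hx
  have hinner : ∀ s : Ω, ⟪K s, x⟫_ℂ = 0 := by
    intro s
    have h2 := (hsamp2 x s).2
    simp [hx] at h2
    exact h2.symm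
  have hmem : x ∈ (Submodule.span ℂ (Set.range K))ᗮ := by
    rw [Submodule.mem_orthogonal]
    intro v hv
    induction hv using Submodule.span_induction with
    | mem y hy => obtain ⟨s, rfl⟩ := hy; exact hinner s
    | zero => simp
    | add y z _ _ hy hz => rw [inner_add_left, hy, hz, add_zero]
    | smul c y _ hy => rw [inner_smul_left, hy, mul_zero]
  have hbot : (Submodule.span ℂ (Set.range K))ᗮ = ⊥ :=
    Submodule.topologicalClosure_eq_top_iff.mp
      (Submodule.dense_iff_topologicalClosure_eq_top.mp hK)
  rw [hbot] at hmem
  simpa using hmem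
end

section
/- If in addition there exists a > 0 such that ‖∑_j c_j S_j‖_H = a ‖c‖_{ℓ²} for every c ∈ ℓ²(ℕ), then ⟪S_m, S_n⟫_H = a² δ_{mn} for all m, n ∈ ℕ (so (S_n) is a complete orthogonal system in H with all norms equal to a), and a² ⟪K s, K t⟫ = ∑_{n∈ℕ} \overline{S_n(s)} S_n(t) for all s, t ∈ Ω. -/
open scoped InnerProductSpace

/-!
Polarizing `‖∑ c_j S_j‖ = a ‖c‖` on two-term sequences gives `⟪S_i, S_j⟫ = a² δ_ij`, so `a⁻¹ S` is
orthonormal and every series `∑ c_j S_j` with `c ∈ ℓ²` converges. The sampling series of `x`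
has the same inner products with every `K s` as `x`, so by density of `span (range K)` it sums to
`x`. Hence `a⁻¹ S` is a Hilbert basis, and Parseval's identity for it is the kernel formula.
-/

open Submodule Set

section

variable {ι 𝕜 E F : Type*} [RCLike 𝕜] [NormedAddCommGroup E] [InnerProductSpace 𝕜 E]
  [NormedAddCommGroup F] [InnerProductSpace 𝕜 F]

theorem inner_eq_sq_mul_inner_of_norm_add_smul {x y : E} {u v : F} {a : ℝ}
    (h : ∀ z : 𝕜, ‖x + z • y‖ = a * ‖u + z • v‖) :
    ⟪x, y⟫_𝕜 = (a : 𝕜) ^ 2 * ⟪u, v⟫_𝕜 := by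
  have hsub : ∀ z : 𝕜, ‖x - z • y‖ = a * ‖u - z • v‖ := fun z => by
    simpa only [neg_smul, ← sub_eq_add_neg] using h (-z)
  have h1 := h 1
  have h2 := hsub 1
  simp only [one_smul] at h1 h2
  rw [inner_eq_sum_norm_sq_div_four x y, inner_eq_sum_norm_sq_div_four u v, h1, h2, h RCLike.I,
    hsub RCLike.I]
  push_cast
  ring

theorem hasSum_lp_single_smul [DecidableEq ι] (S : ι → E) (i : ι) (z : 𝕜) :
    HasSum (fun j => (lp.single 2 i z : lp (fun _ : ι => 𝕜) 2) j • S j) (z • S i) := by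
  have h := hasSum_single (f := fun j => (lp.single 2 i z : lp (fun _ : ι => 𝕜) 2) j • S j) i
    fun j hj => by simp [hj]
  rwa [lp.single_apply_self] at h

theorem inner_eq_ite_of_norm_hasSum_eq [DecidableEq ι] {S : ι → E} {a : ℝ}
    (htight : ∀ c : lp (fun _ : ι => 𝕜) 2, ∀ y : E,
      HasSum (fun j => c j • S j) y → ‖y‖ = a * ‖c‖) (i j : ι) :
    ⟪S i, S j⟫_𝕜 = if i = j then (a : 𝕜) ^ 2 else 0 := by
  have key : ⟪S i, S j⟫_𝕜 =
      (a : 𝕜) ^ 2 * ⟪(lp.single 2 i 1 : lp (fun _ : ι => 𝕜) 2), lp.single 2 j 1⟫_𝕜 := by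
    refine inner_eq_sq_mul_inner_of_norm_add_smul fun z => htight _ _ ?_
    simpa only [one_smul, lp.coeFn_add, Pi.add_apply, add_smul, ← lp.single_smul, smul_eq_mul,
      mul_one] using (hasSum_lp_single_smul S i (1 : 𝕜)).add (hasSum_lp_single_smul S j z)
  rw [key, lp.inner_single_left, lp.single_apply]
  by_cases hij : i = j
  · subst hij; simp
  · simp [hij]

theorem orthonormal_inv_smul_of_inner_eq_ite [DecidableEq ι] {S : ι → E} {a : ℝ} (ha : a ≠ 0)
    (hS : ∀ i j, ⟪S i, S j⟫_𝕜 = if i = j then (a : 𝕜) ^ 2 else 0) :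
    Orthonormal 𝕜 fun j => (a : 𝕜)⁻¹ • S j := by
  have ha' : (a : 𝕜) ≠ 0 := RCLike.ofReal_ne_zero.mpr ha
  rw [orthonormal_iff_ite]
  intro i j
  rw [inner_smul_left, inner_smul_right, hS, map_inv₀, RCLike.conj_ofReal]
  split_ifs
  · field_simp
  · simp

theorem summable_smul_of_inner_eq_ite [CompleteSpace E] [DecidableEq ι] {S : ι → E} {a : ℝ}
    (ha : a ≠ 0) (hS : ∀ i j, ⟪S i, S j⟫_𝕜 = if i = j then (a : 𝕜) ^ 2 else 0) {c : ι → 𝕜}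
    (hc : Memℓp c 2) : Summable fun j => c j • S j := by
  have ha' : (a : 𝕜) ≠ 0 := RCLike.ofReal_ne_zero.mpr ha
  have h := (orthonormal_inv_smul_of_inner_eq_ite ha hS).orthogonalFamily.summable_of_lp
    (⟨fun j => (a : 𝕜) * c j, hc.const_mul _⟩ : lp (fun _ : ι => 𝕜) 2)
  refine h.congr fun j => ?_
  simp only [LinearIsometry.toSpanSingleton_apply, smul_smul]
  rw [mul_comm, inv_mul_cancel_left₀ ha']

theorem Dense.eq_of_inner_span_range_left {Ω : Type*} {K : Ω → E}
    (hK : Dense (span 𝕜 (range K) : Set E)) {x y : E} (h : ∀ s, ⟪K s, x⟫_𝕜 = ⟪K s, y⟫_𝕜) :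
    x = y := by
  have hspan : span 𝕜 (range K) ≤ LinearMap.ker (innerₛₗ 𝕜 (x - y)) :=
    span_le.2 <| range_subset_iff.2 fun s => by
      rw [SetLike.mem_coe, LinearMap.mem_ker, innerₛₗ_apply_apply, inner_sub_left,
        ← inner_conj_symm, h, inner_conj_symm, sub_self]
  refine hK.eq_of_inner_left 𝕜 fun v hv => ?_
  rw [← sub_eq_zero, ← inner_sub_left]
  exact hspan hv

theorem top_le_topologicalClosure_span_of_forall_hasSum {v : ι → E}
    (hv : ∀ x, ∃ c : ι → 𝕜, HasSum (fun j => c j • v j) x) :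
    ⊤ ≤ (span 𝕜 (range v)).topologicalClosure := by
  rintro x -
  obtain ⟨c, hc⟩ := hv x
  exact mem_closure_of_tendsto hc (.of_forall fun F =>
    sum_mem fun j _ => smul_mem _ _ (subset_span (mem_range_self j)))

theorem hasSum_of_dense_span_of_tsum_inner_eq {Ω : Type*} {K : Ω → E}
    (hK : Dense (span 𝕜 (range K) : Set E)) {S : ι → E} {c : ι → 𝕜} {x : E}
    (hc : Summable fun j => c j • S j) (h : ∀ s, ∑' j, c j * ⟪K s, S j⟫_𝕜 = ⟪K s, x⟫_𝕜) :
    HasSum (fun j => c j • S j) x := by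
  convert hc.hasSum
  refine hK.eq_of_inner_span_range_left fun s => ?_
  have hs := hc.hasSum.mapL (innerSL 𝕜 (K s))
  simp only [innerSL_apply_apply, inner_smul_right] at hs
  exact (h s).symm.trans hs.tsum_eq

theorem sq_mul_inner_eq_tsum_of_inner_eq_ite [CompleteSpace E] [DecidableEq ι] {S : ι → E}
    {a : ℝ} (ha : a ≠ 0) (hS : ∀ i j, ⟪S i, S j⟫_𝕜 = if i = j then (a : 𝕜) ^ 2 else 0)
    (hcomplete : ∀ x, ∃ c : ι → 𝕜, HasSum (fun j => c j • S j) x) (x y : E) :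
    (a : 𝕜) ^ 2 * ⟪x, y⟫_𝕜 = ∑' j, ⟪x, S j⟫_𝕜 * ⟪S j, y⟫_𝕜 := by
  have ha' : (a : 𝕜) ≠ 0 := RCLike.ofReal_ne_zero.mpr ha
  have hspan := top_le_topologicalClosure_span_of_forall_hasSum
    (v := fun j => (a : 𝕜)⁻¹ • S j) fun x => by
      obtain ⟨c, hc⟩ := hcomplete x
      exact ⟨fun j => c j * a, by simpa [smul_smul, mul_assoc, ha'] using hc⟩
  let b := HilbertBasis.mk (orthonormal_inv_smul_of_inner_eq_ite ha hS) hspan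
  rw [← b.tsum_inner_mul_inner x y, ← tsum_mul_left]
  refine tsum_congr fun j => ?_
  simp only [b, HilbertBasis.coe_mk, inner_smul_left, inner_smul_right, map_inv₀,
    RCLike.conj_ofReal]
  field_simp

end

/-- The paper's inner product `⟪x, y⟫`, linear in the first argument, is `⟪y, x⟫_ℂ`. -/
theorem stmt11_general {Ω : Type*} {H : Type*}
    [NormedAddCommGroup H] [InnerProductSpace ℂ H] [CompleteSpace H]
    (K : Ω → H) (hK : Dense ((Submodule.span ℂ (Set.range K) : Submodule ℂ H) : Set H))
    (S : ℕ → H)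
    (t : ℕ → Ω) (a : ℕ → ℂ)
    (hsamp1 : ∀ x : H, Memℓp (fun j : ℕ => ⟪K (t j), x⟫_ℂ / a j) 2)
    (hsamp2 : ∀ x : H, ∀ s : Ω,
      Summable (fun j : ℕ => ‖⟪K (t j), x⟫_ℂ / a j * ⟪K s, S j⟫_ℂ‖) ∧
      ∑' j : ℕ, ⟪K (t j), x⟫_ℂ / a j * ⟪K s, S j⟫_ℂ = ⟪K s, x⟫_ℂ)
    (a₀ : ℝ) (ha₀ : 0 < a₀)
    (htight : ∀ c : lp (fun _ : ℕ => ℂ) 2, ∀ y : H,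
      HasSum (fun j : ℕ => c j • S j) y → ‖y‖ = a₀ * ‖c‖) :
    (∀ m n : ℕ, ⟪S n, S m⟫_ℂ = if m = n then ((a₀ : ℂ) ^ 2) else 0) ∧
    ∀ s u : Ω, (a₀ : ℂ) ^ 2 * ⟪K u, K s⟫_ℂ =
      ∑' n : ℕ, (starRingEnd ℂ) ⟪K s, S n⟫_ℂ * ⟪K u, S n⟫_ℂ := by
  have hortho := inner_eq_ite_of_norm_hasSum_eq htight
  have hsampling : ∀ x : H, ∃ c : ℕ → ℂ, HasSum (fun j => c j • S j) x := fun x =>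
    ⟨_, hasSum_of_dense_span_of_tsum_inner_eq hK
      (summable_smul_of_inner_eq_ite ha₀.ne' hortho (hsamp1 x)) fun s => (hsamp2 x s).2⟩
  refine ⟨fun m n => (hortho n m).trans (if_congr eq_comm rfl rfl), fun s u => ?_⟩
  exact (sq_mul_inner_eq_tsum_of_inner_eq_ite ha₀.ne' hortho hsampling (K u) (K s)).trans
    (tsum_congr fun n => by rw [inner_conj_symm, mul_comm])

/-- The tight (`a = b`) case of the converse Kramer theorem (Hilbert-space case):
if `‖∑_j c_j S_j‖ = a₀‖c‖` for all `c ∈ ℓ²`, then `⟪S_m, S_n⟫ = a₀² δ_{mn}` and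
`a₀² ⟪K s, K u⟫ = ∑_n conj (S_n(s)) · S_n(u)` for all `s, u ∈ Ω`.
(The paper's inner product `⟪x,y⟫`, linear in the first argument, is `⟪y,x⟫_ℂ`.) -/
theorem stmt11 {Ω : Type*} [Nonempty Ω] {H : Type*}
    [NormedAddCommGroup H] [InnerProductSpace ℂ H] [CompleteSpace H]
    (K : Ω → H) (hK : Dense ((Submodule.span ℂ (Set.range K) : Submodule ℂ H) : Set H))
    (S : ℕ → H)
    (hl2 : ∀ t : Ω, Memℓp (fun j : ℕ => ⟪K t, S j⟫_ℂ) 2)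
    (hdense : Dense ((Submodule.span ℂ
        {f : lp (fun _ : ℕ => ℂ) 2 | ∃ t : Ω, ∀ j : ℕ, f j = ⟪K t, S j⟫_ℂ} :
          Submodule ℂ (lp (fun _ : ℕ => ℂ) 2)) : Set (lp (fun _ : ℕ => ℂ) 2)))
    (hindep : ∀ c : lp (fun _ : ℕ => ℂ) 2,
      (∀ t : Ω, ∑' j : ℕ, c j * ⟪K t, S j⟫_ℂ = 0) → c = 0)
    (t : ℕ → Ω) (a : ℕ → ℂ) (ha : ∀ j, a j ≠ 0)
    (hsamp1 : ∀ x : H, Memℓp (fun j : ℕ => ⟪K (t j), x⟫_ℂ / a j) 2)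
    (hsamp2 : ∀ x : H, ∀ s : Ω,
      Summable (fun j : ℕ => ‖⟪K (t j), x⟫_ℂ / a j * ⟪K s, S j⟫_ℂ‖) ∧
      ∑' j : ℕ, ⟪K (t j), x⟫_ℂ / a j * ⟪K s, S j⟫_ℂ = ⟪K s, x⟫_ℂ)
    (a₀ : ℝ) (ha₀ : 0 < a₀)
    (htight : ∀ c : lp (fun _ : ℕ => ℂ) 2, ∀ y : H,
      HasSum (fun j : ℕ => c j • S j) y → ‖y‖ = a₀ * ‖c‖) :
    (∀ m n : ℕ, ⟪S n, S m⟫_ℂ = if m = n then ((a₀ : ℂ) ^ 2) else 0) ∧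
    ∀ s u : Ω, (a₀ : ℂ) ^ 2 * ⟪K u, K s⟫_ℂ =
      ∑' n : ℕ, (starRingEnd ℂ) ⟪K s, S n⟫_ℂ * ⟪K u, S n⟫_ℂ :=
  stmt11_general K hK S t a hsamp1 hsamp2 a₀ ha₀ htight
end

section
/- Let H be a complex Hilbert space with inner product ⟪·,·⟫ linear in the first argument, Ω a set, and Φ : Ω → H a map. Let (x_n)_{n∈ℕ} and (y_n)_{n∈ℕ} be sequences in H with ⟪y_n, x_m⟫ = δ_{nm}, with the linear span of {y_n} dense in H, with constants 0 < A ≤ B such that A‖c‖_{ℓ²} ≤ ‖∑_n c_n y_n‖ ≤ B‖c‖_{ℓ²} for every c ∈ ℓ²(ℕ) (so (y_n) is a Riesz basis for H with biorthogonal sequence (x_n)), and such that every x ∈ H satisfies x = ∑_n ⟪x, x_n⟫ y_n with convergence in H. Assume there exist points (t_n)_{n∈ℕ} in Ω and nonzero complex scalars (a_n)_{n∈ℕ} with Φ(t_n) = \overline{a_n} x_n for all n. For x ∈ H define f_x(t) = ⟪x, Φ(t)⟫ and S_n(t) = ⟪y_n, Φ(t)⟫. Then for every x ∈ H and every t ∈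 Ω: f_x(t) = ∑_{n∈ℕ} f_x(t_n) S_n(t)/a_n, the series converging absolutely; moreover, on every subset of Ω on which t ↦ ‖Φ(t)‖ is bounded, the convergence is uniform. -/
/-!
By the interpolation condition, the sample `f_x(t_n) / a_n` is the coefficient `⟪x, x_n⟫` of `x`
in its Riesz expansion `x = ∑ ⟪x, x_n⟫ y_n`, so the sampling series is `⟪·, Φ t⟫` applied to that
expansion. It converges absolutely because the coefficients are in `ℓ²` (lower Riesz bound) and so
is `(S_n(t))_n` (upper Riesz bound, i.e. the Bessel inequality), and uniformly where `‖Φ t‖ ≤ M`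
since the error is then at most `M` times the norm of the remainder of the expansion.
-/

open scoped InnerProductSpace ComplexConjugate Topology
open Filter

theorem lp.norm_sum_single_sq {α : Type*} [DecidableEq α] {E : α → Type*}
    [∀ i, NormedAddCommGroup (E i)] (f : ∀ i, E i) (s : Finset α) :
    ‖∑ i ∈ s, lp.single 2 i (f i)‖ ^ 2 = ∑ i ∈ s, ‖f i‖ ^ 2 := by
  simpa using lp.norm_sum_single (p := 2) (by norm_num) f s

theorem lp.hasSum_sum_single_smul {𝕜 E : Type*} [RCLike 𝕜] [NormedAddCommGroup E]
    [NormedSpace 𝕜 E] (y : ℕ → E) (c : ℕ → 𝕜) (s : Finset ℕ) :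
    HasSum (fun n => (∑ m ∈ s, lp.single 2 m (c m) : lp (fun _ : ℕ => 𝕜) 2) n • y n)
      (∑ n ∈ s, c n • y n) := by
  simp only [lp.coeFn_sum, lp.coeFn_single, Finset.sum_apply, Finset.sum_pi_single, ite_smul,
    zero_smul]
  convert hasSum_sum_of_ne_finset_zero (L := .unconditional ℕ) fun n (hn : n ∉ s) => if_neg hn
    using 1
  exact (Finset.sum_congr rfl fun n hn => if_pos hn).symm

section Riesz

variable (𝕜 : Type*) {E : Type*} [RCLike 𝕜]

def HasLowerRieszBound [NormedAddCommGroup E] [NormedSpace 𝕜 E] (y : ℕ → E) (A : ℝ) : Prop :=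
  ∀ c : lp (fun _ : ℕ => 𝕜) 2, ∃ z : E, HasSum (fun n => c n • y n) z ∧ A * ‖c‖ ≤ ‖z‖

def HasUpperRieszBound [NormedAddCommGroup E] [NormedSpace 𝕜 E] (y : ℕ → E) (B : ℝ) : Prop :=
  ∀ c : lp (fun _ : ℕ => 𝕜) 2, ∃ z : E, HasSum (fun n => c n • y n) z ∧ ‖z‖ ≤ B * ‖c‖

end Riesz

namespace HasLowerRieszBound

variable {𝕜 E : Type*} [RCLike 𝕜] [NormedAddCommGroup E] [NormedSpace 𝕜 E] {y : ℕ → E} {A : ℝ}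

theorem sq_mul_sum_le_norm_sum_sq (h : HasLowerRieszBound 𝕜 y A) (hA : 0 ≤ A) (c : ℕ → 𝕜)
    (s : Finset ℕ) : A ^ 2 * ∑ n ∈ s, ‖c n‖ ^ 2 ≤ ‖∑ n ∈ s, c n • y n‖ ^ 2 := by
  obtain ⟨z, hz, hAz⟩ := h (∑ n ∈ s, lp.single 2 n (c n))
  rw [← hz.unique (lp.hasSum_sum_single_smul y c s), ← lp.norm_sum_single_sq, ← mul_pow]
  exact pow_le_pow_left₀ (by positivity) hAz 2

theorem summable_sq_norm (h : HasLowerRieszBound 𝕜 y A) (hA : 0 < A) {c : ℕ → 𝕜} {v : E}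
    (hv : HasSum (fun n => c n • y n) v) : Summable fun n => ‖c n‖ ^ 2 := by
  obtain ⟨K, hK⟩ := isBounded_iff_forall_norm_le.1
    (Metric.isBounded_range_of_tendsto _ hv.tendsto_sum_nat)
  refine summable_of_sum_range_le (c := K ^ 2 / A ^ 2) (fun _ => by positivity) fun N => ?_
  rw [le_div_iff₀' (by positivity)]
  exact (h.sq_mul_sum_le_norm_sum_sq hA.le c _).trans
    (pow_le_pow_left₀ (norm_nonneg _) (hK _ ⟨N, rfl⟩) 2)

end HasLowerRieszBound

namespace HasUpperRieszBound

variable {𝕜 E : Type*} [RCLike 𝕜] {y : ℕ → E} {B : ℝ}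

theorem norm_sum_sq_le [NormedAddCommGroup E] [NormedSpace 𝕜 E] (h : HasUpperRieszBound 𝕜 y B)
    (c : ℕ → 𝕜) (s : Finset ℕ) : ‖∑ n ∈ s, c n • y n‖ ^ 2 ≤ B ^ 2 * ∑ n ∈ s, ‖c n‖ ^ 2 := by
  obtain ⟨z, hz, hzB⟩ := h (∑ n ∈ s, lp.single 2 n (c n))
  rw [← hz.unique (lp.hasSum_sum_single_smul y c s), ← lp.norm_sum_single_sq, ← mul_pow]
  exact pow_le_pow_left₀ (norm_nonneg _) hzB 2

theorem summable_sq_norm_inner [NormedAddCommGroup E] [InnerProductSpace 𝕜 E]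
    (h : HasUpperRieszBound 𝕜 y B) (w : E) : Summable fun n => ‖⟪w, y n⟫_𝕜‖ ^ 2 := by
  refine summable_of_sum_range_le (c := B ^ 2 * ‖w‖ ^ 2) (fun _ => by positivity) fun N => ?_
  set S := ∑ n ∈ Finset.range N, ‖⟪w, y n⟫_𝕜‖ ^ 2
  set z := ∑ n ∈ Finset.range N, conj ⟪w, y n⟫_𝕜 • y n
  have hwz : ⟪w, z⟫_𝕜 = S := by
    simp only [z, S, inner_sum, inner_smul_right, RCLike.conj_mul, RCLike.ofReal_sum,
      RCLike.ofReal_pow]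
  have hS : S ≤ ‖w‖ * ‖z‖ :=
    calc S ≤ ‖(S : 𝕜)‖ := by rw [RCLike.norm_ofReal]; exact le_abs_self S
      _ = ‖⟪w, z⟫_𝕜‖ := by rw [hwz]
      _ ≤ ‖w‖ * ‖z‖ := norm_inner_le_norm w z
  have hz : ‖z‖ ^ 2 ≤ B ^ 2 * S := by
    simpa only [RCLike.norm_conj] using h.norm_sum_sq_le (fun n => conj ⟪w, y n⟫_𝕜) _
  have hS0 : 0 ≤ S := by positivity
  have key : S * S ≤ (B ^ 2 * ‖w‖ ^ 2) * S :=
    calc S * S ≤ (‖w‖ * ‖z‖) * (‖w‖ * ‖z‖) := mul_self_le_mul_self hS0 hS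
      _ = ‖w‖ ^ 2 * ‖z‖ ^ 2 := by ring
      _ ≤ ‖w‖ ^ 2 * (B ^ 2 * S) := by gcongr
      _ = (B ^ 2 * ‖w‖ ^ 2) * S := by ring
  rcases hS0.eq_or_lt with hS_zero | hSpos
  · rw [← hS_zero]; positivity
  · exact le_of_mul_le_mul_right key hSpos

end HasUpperRieszBound

theorem tendstoUniformlyOn_inner_of_norm_le {𝕜 E Ω ι : Type*} [RCLike 𝕜] [NormedAddCommGroup E]
    [InnerProductSpace 𝕜 E] {g : Ω → E} {U : Set Ω} {M : ℝ} (hM : ∀ s ∈ U, ‖g s‖ ≤ M)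
    {l : Filter ι} {u : ι → E} {v : E} (hu : Tendsto u l (𝓝 v)) :
    TendstoUniformlyOn (fun i s => ⟪g s, u i⟫_𝕜) (fun s => ⟪g s, v⟫_𝕜) l U := by
  rw [Metric.tendstoUniformlyOn_iff]
  intro ε hε
  have hnorm := (tendsto_iff_norm_sub_tendsto_zero.mp hu).const_mul M
  rw [mul_zero] at hnorm
  filter_upwards [hnorm.eventually (gt_mem_nhds hε)] with i hi s hs
  calc dist ⟪g s, v⟫_𝕜 ⟪g s, u i⟫_𝕜 = ‖⟪g s, u i - v⟫_𝕜‖ := by rw [dist_eq_norm', inner_sub_right]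
    _ ≤ ‖g s‖ * ‖u i - v‖ := norm_inner_le_norm _ _
    _ ≤ M * ‖u i - v‖ := mul_le_mul_of_nonneg_right (hM s hs) (norm_nonneg _)
    _ < ε := hi

theorem summable_norm_mul_of_summable_sq {ι R : Type*} [NormedRing R] {f g : ι → R}
    (hf : Summable fun i => ‖f i‖ ^ 2) (hg : Summable fun i => ‖g i‖ ^ 2) :
    Summable fun i => ‖f i * g i‖ :=
  ((hf.add hg).div_const 2).of_nonneg_of_le (fun _ => norm_nonneg _) fun i =>
    (norm_mul_le _ _).trans <| by nlinarith [two_mul_le_add_sq ‖f i‖ ‖g i‖]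

-- The paper's inner product `⟪x, y⟫`, linear in the first argument, is `⟪y, x⟫_ℂ` here.
theorem stmt12_general {Ω : Type*} {H : Type*}
    [NormedAddCommGroup H] [InnerProductSpace ℂ H]
    (Φ : Ω → H) (x y : ℕ → H)
    (A B : ℝ) (hA : 0 < A)
    (hriesz : ∀ c : lp (fun _ : ℕ => ℂ) 2, ∃ z : H,
      HasSum (fun n : ℕ => c n • y n) z ∧ A * ‖c‖ ≤ ‖z‖ ∧ ‖z‖ ≤ B * ‖c‖)
    (hexp : ∀ v : H, HasSum (fun n : ℕ => ⟪x n, v⟫_ℂ • y n) v)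
    (t : ℕ → Ω) (a : ℕ → ℂ) (ha : ∀ n, a n ≠ 0)
    (hinterp : ∀ n : ℕ, Φ (t n) = (starRingEnd ℂ) (a n) • x n) :
    ∀ v : H,
      (∀ s : Ω,
        Summable (fun n : ℕ => ‖⟪Φ (t n), v⟫_ℂ * (⟪Φ s, y n⟫_ℂ / a n)‖) ∧
        ⟪Φ s, v⟫_ℂ = ∑' n : ℕ, ⟪Φ (t n), v⟫_ℂ * (⟪Φ s, y n⟫_ℂ / a n)) ∧
      ∀ U : Set Ω, (∃ M : ℝ, ∀ s ∈ U, ‖Φ s‖ ≤ M) →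
        TendstoUniformlyOn
          (fun (N : ℕ) (s : Ω) =>
            ∑ n ∈ Finset.range N, ⟪Φ (t n), v⟫_ℂ * (⟪Φ s, y n⟫_ℂ / a n))
          (fun s : Ω => ⟪Φ s, v⟫_ℂ) atTop U := by
  intro v
  have hlow : HasLowerRieszBound ℂ y A := fun c => (hriesz c).imp fun _ h => ⟨h.1, h.2.1⟩
  have hup : HasUpperRieszBound ℂ y B := fun c => (hriesz c).imp fun _ h => ⟨h.1, h.2.2⟩
  have hsample : ∀ s n, ⟪Φ (t n), v⟫_ℂ * (⟪Φ s, y n⟫_ℂ / a n) = ⟪x n, v⟫_ℂ * ⟪Φ s, y n⟫_ℂ := by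
    intro s n
    rw [hinterp, inner_smul_left, Complex.conj_conj]
    field_simp [ha n]
  have hinner : ∀ s, HasSum (fun n => ⟪x n, v⟫_ℂ * ⟪Φ s, y n⟫_ℂ) ⟪Φ s, v⟫_ℂ := fun s => by
    simpa [inner_smul_right, mul_comm] using (hexp v).mapL (innerSL ℂ (Φ s))
  simp only [hsample]
  refine ⟨fun s => ⟨?_, (hinner s).tsum_eq.symm⟩, fun U ⟨M, hM⟩ => ?_⟩
  · exact summable_norm_mul_of_summable_sq (hlow.summable_sq_norm hA (hexp v))
      (hup.summable_sq_norm_inner (Φ s))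
  · simpa [inner_sum, inner_smul_right] using
      tendstoUniformlyOn_inner_of_norm_le (𝕜 := ℂ) hM (hexp v).tendsto_sum_nat

/-- Hilbert-space case of the abstract Kramer sampling theorem: if `(y_n)` is a Riesz
basis of `H` with biorthogonal sequence `(x_n)`, and `Φ(t_n) = conj (a_n) • x_n`, then
every `f_x(t) = ⟪x, Φ t⟫` has the sampling expansion
`f_x(t) = ∑_n f_x(t_n) S_n(t)/a_n` with `S_n(t) = ⟪y_n, Φ t⟫`, the series converging
absolutely, and uniformly on subsets where `t ↦ ‖Φ t‖` is bounded.
(The paper's inner product `⟪x,y⟫`, linear in the first argument, is `⟪y,x⟫_ℂ`.) -/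
theorem stmt12 {Ω : Type*} {H : Type*}
    [NormedAddCommGroup H] [InnerProductSpace ℂ H] [CompleteSpace H]
    (Φ : Ω → H) (x y : ℕ → H)
    (hbi : ∀ n m : ℕ, ⟪x m, y n⟫_ℂ = if n = m then 1 else 0)
    (hdense : Dense ((Submodule.span ℂ (Set.range y) : Submodule ℂ H) : Set H))
    (A B : ℝ) (hA : 0 < A) (hAB : A ≤ B)
    (hriesz : ∀ c : lp (fun _ : ℕ => ℂ) 2, ∃ z : H,
      HasSum (fun n : ℕ => c n • y n) z ∧ A * ‖c‖ ≤ ‖z‖ ∧ ‖z‖ ≤ B * ‖c‖)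
    (hexp : ∀ v : H, HasSum (fun n : ℕ => ⟪x n, v⟫_ℂ • y n) v)
    (t : ℕ → Ω) (a : ℕ → ℂ) (ha : ∀ n, a n ≠ 0)
    (hinterp : ∀ n : ℕ, Φ (t n) = (starRingEnd ℂ) (a n) • x n) :
    ∀ v : H,
      (∀ s : Ω,
        Summable (fun n : ℕ => ‖⟪Φ (t n), v⟫_ℂ * (⟪Φ s, y n⟫_ℂ / a n)‖) ∧
        ⟪Φ s, v⟫_ℂ = ∑' n : ℕ, ⟪Φ (t n), v⟫_ℂ * (⟪Φ s, y n⟫_ℂ / a n)) ∧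
      ∀ U : Set Ω, (∃ M : ℝ, ∀ s ∈ U, ‖Φ s‖ ≤ M) →
        TendstoUniformlyOn
          (fun (N : ℕ) (s : Ω) =>
            ∑ n ∈ Finset.range N, ⟪Φ (t n), v⟫_ℂ * (⟪Φ s, y n⟫_ℂ / a n))
          (fun s : Ω => ⟪Φ s, v⟫_ℂ) atTop U :=
  stmt12_general Φ x y A B hA hriesz hexp t a ha hinterp
end
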